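/- arXiv:2202.05880 — 4 statements merged into one kernel-verified Lean document; each statement's English description precedes it below -/
import Mathlib

section
/- For every finite connected undirected simple graph G with n vertices and diameter d, there exists a time-labeling λ of the edges of G such that the temporal graph (G,λ) is temporally connected, every label used is at most d (so the age of (G,λ) is at most d), and the total number of labels satisfies |λ| ≤ n(n−1). -/
open scoped Classical

variable {V : Type*}

/-- There is a temporal path (a path of `G` whose consecutive edges carry
strictly increasing time-labels) from `u` to `v`. -/
def TemporalReach (G : SimpleGraph V) (lab : Sym2 V → Finset ℕ) (u v : V) : Prop :=
  ∃ p : G.Walk u v, p.IsPath ∧ ∃ ts : List ℕ,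
    ts.Chain' (· < ·) ∧ List.Forall₂ (fun t e => t ∈ lab e) ts p.edges

/-- Every vertex can temporally reach every other vertex. -/
def TemporallyConnected (G : SimpleGraph V) (lab : Sym2 V → Finset ℕ) : Prop :=
  ∀ u v : V, u ≠ v → TemporalReach G lab u v

/-- A time-labeling assigns finite sets of positive integer labels to the edges of `G`
(and nothing to non-edges). -/
def ValidLabeling (G : SimpleGraph V) (lab : Sym2 V → Finset ℕ) : Prop :=
  (∀ e, e ∉ G.edgeSet → lab e = ∅) ∧ ∀ e, ∀ t ∈ lab e, 1 ≤ t

lemma chain'_lt_range' (s n : ℕ) : List.Chain' (· < ·) (List.range' s n) := by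
  cases n with
  | zero => exact List.IsChain.nil
  | succ n =>
    rw [List.range'_succ]
    exact List.chain_lt_range' s n (by norm_num)

/-- For every finite connected graph `G` with `n` vertices and diameter `d` there is a
temporally connecting labeling of age at most `d` with at most `n(n-1)` labels in total. -/
theorem stmt0 [Fintype V] [DecidableEq V] (G : SimpleGraph V) (hG : G.Connected) :
    ∃ lab : Sym2 V → Finset ℕ,
      ValidLabeling G lab ∧
      (∀ e, ∀ t ∈ lab e, t ≤ G.diam) ∧
      TemporallyConnected G lab ∧
      ∑ e : Sym2 V, (lab e).card ≤ Fintype.card V * (Fintype.card V - 1) := by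
  classical
  set n := Fintype.card V with hn
  set D := G.diam with hD
  -- the extended diameter is finite
  have hediam : G.ediam ≠ ⊤ := by
    refine ne_top_of_le_ne_top (ENat.coe_ne_top n) (SimpleGraph.ediam_le_of_edist_le fun u v => ?_)
    obtain ⟨p⟩ := hG u v
    have h1 : G.edist u v ≤ (p.toPath.1.length : ℕ∞) := SimpleGraph.edist_le _
    have h2 : p.toPath.1.length < n := p.toPath.2.length_lt
    exact h1.trans (by exact_mod_cast h2.le)
  have hdistD : ∀ u v : V, G.dist u v ≤ D := fun u v => SimpleGraph.dist_le_diam hediam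
  -- next-step function toward a target
  have hstep : ∀ u v : V, u ≠ v → ∃ w, G.Adj u w ∧ G.dist w v + 1 = G.dist u v := by
    intro u v huv
    obtain ⟨p, hp⟩ := hG.exists_walk_length_eq_dist u v
    have hd : 0 < G.dist u v := hG.pos_dist_of_ne huv
    cases p with
    | nil => simp at hd
    | @cons _ w _ h q =>
      refine ⟨w, h, ?_⟩
      have h1 : G.dist w v ≤ q.length := SimpleGraph.dist_le q
      have h2 : G.dist u v ≤ G.dist u w + G.dist w v := hG.dist_triangle
      have h3 : G.dist u w ≤ 1 := by
        have := SimpleGraph.dist_le h.toWalk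
        simpa using this
      simp only [SimpleGraph.Walk.length_cons] at hp
      omega
  set f : V → V → V := fun v u => if h : u ≠ v then (hstep u v h).choose else u with hf
  have hf_spec : ∀ u v : V, u ≠ v →
      G.Adj u (f v u) ∧ G.dist (f v u) v + 1 = G.dist u v := by
    intro u v h
    simp only [hf, dif_pos h]
    exact (hstep u v h).choose_spec
  set lab : Sym2 V → Finset ℕ := fun e =>
    ((Finset.univ.offDiag).filter
      (fun p : V × V => s(p.1, f p.2 p.1) = e)).image
        (fun p : V × V => D - G.dist p.1 p.2 + 1) with hlab
  have hmem : ∀ u v : V, u ≠ v → D - G.dist u v + 1 ∈ lab s(u, f v u) := by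
    intro u v h
    refine Finset.mem_image.2 ⟨(u, v), ?_, rfl⟩
    refine Finset.mem_filter.2 ⟨Finset.mem_offDiag.2 ⟨Finset.mem_univ _, Finset.mem_univ _, h⟩, rfl⟩
  have hmem' : ∀ e, ∀ t ∈ lab e, ∃ u v : V, u ≠ v ∧ e = s(u, f v u) ∧ t = D - G.dist u v + 1 := by
    intro e t ht
    obtain ⟨p, hp, rfl⟩ := Finset.mem_image.1 ht
    obtain ⟨hod, he⟩ := Finset.mem_filter.1 hp
    exact ⟨p.1, p.2, (Finset.mem_offDiag.1 hod).2.2, he.symm, rfl⟩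
  refine ⟨lab, ⟨?_, ?_⟩, ?_, ?_, ?_⟩
  · -- labels only on edges
    intro e he
    rw [Finset.eq_empty_iff_forall_notMem]
    intro t ht
    obtain ⟨u, v, huv, rfl, -⟩ := hmem' e t ht
    exact he ((G.mem_edgeSet).mpr (hf_spec u v huv).1)
  · -- labels positive
    intro e t ht
    obtain ⟨u, v, -, -, rfl⟩ := hmem' e t ht
    omega
  · -- labels at most the diameter
    intro e t ht
    obtain ⟨u, v, huv, -, rfl⟩ := hmem' e t ht
    have h1 := hdistD u v
    have h2 := hG.pos_dist_of_ne huv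
    omega
  · -- temporal connectivity
    have key : ∀ k : ℕ, ∀ v u : V, G.dist u v = k →
        ∃ p : G.Walk u v, p.IsPath ∧ (∀ x ∈ p.support, G.dist x v ≤ k) ∧
          List.Forall₂ (fun t e => t ∈ lab e) (List.range' (D - k + 1) k) p.edges := by
      intro k
      induction k with
      | zero =>
        intro v u h
        have huv : u = v := by
          rcases SimpleGraph.dist_eq_zero_iff_eq_or_not_reachable.1 h with h' | h'
          · exact h'
          · exact absurd (hG u v) h'
        subst huv
        exact ⟨SimpleGraph.Walk.nil, SimpleGraph.Walk.IsPath.nil, by simp, by simp⟩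
      | succ k ih =>
        intro v u h
        have hne : u ≠ v := by
          intro e; subst e; rw [SimpleGraph.dist_self] at h; omega
        obtain ⟨hadj, hdw⟩ := hf_spec u v hne
        have hw : G.dist (f v u) v = k := by omega
        obtain ⟨q, hq, hsup, hfa⟩ := ih v (f v u) hw
        have hkD : k + 1 ≤ D := h ▸ hdistD u v
        refine ⟨SimpleGraph.Walk.cons hadj q, ?_, ?_, ?_⟩
        · refine hq.cons ?_
          intro hmem2
          have := hsup u hmem2
          omega
        · intro x hx
          rw [SimpleGraph.Walk.support_cons, List.mem_cons] at hx
          rcases hx with rfl | hx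
          · omega
          · exact (hsup x hx).trans (by omega)
        · rw [show D - (k + 1) + 1 = D - k from by omega, List.range'_succ,
            SimpleGraph.Walk.edges_cons]
          refine List.Forall₂.cons ?_ hfa
          have := hmem u v hne
          rw [h, show D - (k + 1) + 1 = D - k from by omega] at this
          exact this
    intro u v huv
    obtain ⟨p, hp, -, hfa⟩ := key (G.dist u v) v u rfl
    exact ⟨p, hp, _, chain'_lt_range' _ _, hfa⟩
  · -- counting
    calc ∑ e : Sym2 V, (lab e).card
        ≤ ∑ e : Sym2 V, ((Finset.univ.offDiag).filter
            (fun p : V × V => s(p.1, f p.2 p.1) = e)).card :=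
          Finset.sum_le_sum fun e _ => Finset.card_image_le
      _ = (Finset.univ.offDiag : Finset (V × V)).card :=
          (Finset.card_eq_sum_card_fiberwise (fun p _ => Finset.mem_univ _)).symm
      _ = n * n - n := by rw [Finset.offDiag_card]; rfl
      _ ≤ n * (n - 1) := by
          cases n with
          | zero => simp
          | succ m => simp [Nat.mul_succ, Nat.succ_mul]
end

section
/- Let d ≥ 3 and let C_{2d} be the cycle graph on n = 2d vertices, whose diameter is d. Then the minimum total number of labels |λ| over all time-labelings λ of C_{2d} with age at most d such that (C_{2d},λ) is temporally connected equals d². -/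
open scoped Classical

variable {V : Type*}

set_option linter.unusedSectionVars false
set_option linter.unnecessarySeqFocus false
set_option maxHeartbeats 1000000

namespace CycleTemp
open SimpleGraph List Finset
open Fin.NatCast Fin.CommRing
variable {n : ℕ} [NeZero n]


lemma val_sub_of_le {x y : Fin n} (h : y.val ≤ x.val) : (x - y).val = x.val - y.val := by
  have hx := x.isLt
  rw [Fin.sub_def]
  show (n - y.val + x.val) % n = x.val - y.val
  have h1 : n - y.val + x.val = n + (x.val - y.val) := by omega
  rw [h1, Nat.add_mod_left, Nat.mod_eq_of_lt (by omega)]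

/-- cyclic distance -/
def cdist (u v : Fin n) : ℕ := min (v - u).val (u - v).val

lemma cdist_comm (u v : Fin n) : cdist u v = cdist v u := Nat.min_comm _ _

lemma cdist_self (u : Fin n) : cdist u u = 0 := by simp [cdist, sub_self]

lemma val_add_le (x y : Fin n) : (x + y).val ≤ x.val + y.val := by
  rw [Fin.add_def]; exact Nat.mod_le _ _

lemma cdist_triangle (u v w : Fin n) : cdist u w ≤ cdist u v + cdist v w := by
  have s1 : (w - u).val ≤ (v - u).val + (w - v).val := by
    have h : w - u = (w - v) + (v - u) := by ring
    rw [h]; calc ((w-v) + (v-u)).val ≤ (w-v).val + (v-u).val := val_add_le _ _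
      _ = (v-u).val + (w-v).val := Nat.add_comm _ _
  have s2 : (u - w).val ≤ (u - v).val + (v - w).val := by
    have h : u - w = (u - v) + (v - w) := by ring
    rw [h]; exact val_add_le _ _
  have c1 : cdist u w ≤ (v - u).val + (v - w).val := by
    rcases le_or_gt (v - w).val (v - u).val with h | h
    · have he : w - u = (v - u) - (v - w) := by ring
      have hv : (w - u).val = (v-u).val - (v-w).val := by rw [he, val_sub_of_le h]
      exact le_trans (min_le_left _ _) (by omega)
    · have he : u - w = (v - w) - (v - u) := by ring
      have hv : (u - w).val = (v-w).val - (v-u).val := by rw [he, val_sub_of_le h.le]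
      exact le_trans (min_le_right _ _) (by omega)
  have c2 : cdist u w ≤ (u - v).val + (w - v).val := by
    rcases le_or_gt (u - v).val (w - v).val with h | h
    · have he : w - u = (w - v) - (u - v) := by ring
      have hv : (w - u).val = (w-v).val - (u-v).val := by rw [he, val_sub_of_le h]
      exact le_trans (min_le_left _ _) (by omega)
    · have he : u - w = (u - v) - (w - v) := by ring
      have hv : (u - w).val = (u-v).val - (w-v).val := by rw [he, val_sub_of_le h.le]
      exact le_trans (min_le_right _ _) (by omega)
  have m1 := min_le_left (w - u).val (u - w).val
  have m2 := min_le_right (w - u).val (u - w).val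
  rcases min_cases (v - u).val (u - v).val with ⟨h1, _⟩ | ⟨h1, _⟩ <;>
    rcases min_cases (w - v).val (v - w).val with ⟨h2, _⟩ | ⟨h2, _⟩ <;>
    simp only [cdist] at * <;> omega

lemma cdist_adj {u v : Fin n} (h : (cycleGraph n).Adj u v) : cdist u v ≤ 1 := by
  rw [cycleGraph_adj'] at h
  rcases h with h | h
  · exact le_trans (min_le_right _ _) h.le
  · exact le_trans (min_le_left _ _) h.le

lemma cdist_le_length {u v : Fin n} (p : (cycleGraph n).Walk u v) : cdist u v ≤ p.length := by
  induction p with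
  | nil => simp [cdist_self]
  | @cons a b c h q ih =>
    refine le_trans (cdist_triangle a b c) ?_
    simp only [Walk.length_cons]
    have := cdist_adj h
    omega

lemma cdist_getVert_le {u v : Fin n} (p : (cycleGraph n).Walk u v) (j : ℕ) :
    cdist u (p.getVert j) ≤ j := by
  induction j with
  | zero => simp [p.getVert_zero, cdist_self]
  | succ j ih =>
    rcases lt_or_ge j p.length with h | h
    · refine le_trans (cdist_triangle u (p.getVert j) _) ?_
      have := cdist_adj (p.adj_getVert_succ h)
      omega
    · rw [p.getVert_of_length_le (le_trans h (Nat.le_succ j))]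
      rw [p.getVert_of_length_le h] at ih
      omega

lemma cdist_getVert_suffix_le {u v : Fin n} (p : (cycleGraph n).Walk u v) (j : ℕ) :
    cdist (p.getVert j) v ≤ p.length - j := by
  have h1 := cdist_getVert_le p.reverse (p.length - j)
  rw [p.getVert_reverse] at h1
  rcases le_or_gt j p.length with hj | hj
  · have h2 : p.length - (p.length - j) = j := by omega
    rw [h2] at h1
    rw [cdist_comm]
    simpa using h1
  · rw [p.getVert_of_length_le hj.le, cdist_self]; omega



lemma natCast_fin_inj {a b : ℕ} (ha : a < n) (hb : b < n) (h : (a : Fin n) = b) : a = b := by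
  have := congrArg Fin.val h
  simpa [Nat.mod_eq_of_lt ha, Nat.mod_eq_of_lt hb] using this

lemma adj_succ (hn : 2 ≤ n) (u : Fin n) : (cycleGraph n).Adj u (u + 1) := by
  rw [cycleGraph_adj']
  right
  have h : u + 1 - u = ((1:ℕ) : Fin n) := by push_cast; ring
  rw [h, Fin.val_natCast, Nat.mod_eq_of_lt (by omega)]

lemma adj_pred (hn : 2 ≤ n) (u : Fin n) : (cycleGraph n).Adj u (u - 1) := by
  rw [cycleGraph_adj']
  left
  have h : u - (u - 1) = ((1:ℕ) : Fin n) := by push_cast; ring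
  rw [h, Fin.val_natCast, Nat.mod_eq_of_lt (by omega)]

def cw (hn : 2 ≤ n) (u : Fin n) : (k : ℕ) → (cycleGraph n).Walk u (u + (k : Fin n))
  | 0 => Walk.nil.copy rfl (by push_cast; ring)
  | (k+1) => (Walk.cons (adj_succ hn u) (cw hn (u+1) k)).copy rfl (by push_cast; ring)

def ccw (hn : 2 ≤ n) (u : Fin n) : (k : ℕ) → (cycleGraph n).Walk u (u - (k : Fin n))
  | 0 => Walk.nil.copy rfl (by push_cast; ring)
  | (k+1) => (Walk.cons (adj_pred hn u) (ccw hn (u-1) k)).copy rfl (by push_cast; ring)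

lemma length_cw (hn : 2 ≤ n) (u : Fin n) (k : ℕ) : (cw hn u k).length = k := by
  induction k generalizing u with
  | zero => simp [cw]
  | succ k ih => simp [cw, ih]

lemma length_ccw (hn : 2 ≤ n) (u : Fin n) (k : ℕ) : (ccw hn u k).length = k := by
  induction k generalizing u with
  | zero => simp [ccw]
  | succ k ih => simp [ccw, ih]

lemma support_cw (hn : 2 ≤ n) (u : Fin n) (k : ℕ) :
    (cw hn u k).support = (List.range (k+1)).map (fun j : ℕ => u + (j : Fin n)) := by
  induction k generalizing u with
  | zero => simp [cw, List.range_succ]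
  | succ k ih =>
    rw [List.range_succ_eq_map]
    simp only [cw, Walk.support_copy, Walk.support_cons, ih, List.map_cons, List.map_map]
    congr 1
    · push_cast; ring
    · apply List.map_congr_left
      intro j _
      simp only [Function.comp]
      push_cast; ring

lemma support_ccw (hn : 2 ≤ n) (u : Fin n) (k : ℕ) :
    (ccw hn u k).support = (List.range (k+1)).map (fun j : ℕ => u - (j : Fin n)) := by
  induction k generalizing u with
  | zero => simp [ccw, List.range_succ]
  | succ k ih =>
    rw [List.range_succ_eq_map]
    simp only [ccw, Walk.support_copy, Walk.support_cons, ih, List.map_cons, List.map_map]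
    congr 1
    · push_cast; ring
    · apply List.map_congr_left
      intro j _
      simp only [Function.comp]
      push_cast; ring

lemma edges_cw (hn : 2 ≤ n) (u : Fin n) (k : ℕ) :
    (cw hn u k).edges = (List.range k).map (fun j : ℕ => s(u + (j : Fin n), u + (j : Fin n) + 1)) := by
  induction k generalizing u with
  | zero => simp [cw, List.range_succ]
  | succ k ih =>
    rw [List.range_succ_eq_map]
    simp only [cw, Walk.edges_copy, Walk.edges_cons, ih, List.map_cons, List.map_map]
    congr 1
    · push_cast; ring_nf
    · apply List.map_congr_left
      intro j _
      simp only [Function.comp]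
      congr 1 <;> push_cast <;> ring

lemma edges_ccw (hn : 2 ≤ n) (u : Fin n) (k : ℕ) :
    (ccw hn u k).edges = (List.range k).map (fun j : ℕ => s(u - (j : Fin n), u - (j : Fin n) - 1)) := by
  induction k generalizing u with
  | zero => simp [ccw, List.range_succ]
  | succ k ih =>
    rw [List.range_succ_eq_map]
    simp only [ccw, Walk.edges_copy, Walk.edges_cons, ih, List.map_cons, List.map_map]
    congr 1
    · push_cast; ring_nf
    · apply List.map_congr_left
      intro j _
      simp only [Function.comp]
      congr 1 <;> push_cast <;> ring

lemma isPath_cw (hn : 2 ≤ n) (u : Fin n) (k : ℕ) (hk : k < n) : (cw hn u k).IsPath := by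
  apply Walk.IsPath.mk'
  rw [support_cw]
  refine List.Nodup.map_on ?_ List.nodup_range
  intro x hx y hy hxy
  rw [List.mem_range] at hx hy
  have h2 : (x : Fin n) = y := add_left_cancel hxy
  exact natCast_fin_inj (by omega) (by omega) h2

lemma isPath_ccw (hn : 2 ≤ n) (u : Fin n) (k : ℕ) (hk : k < n) : (ccw hn u k).IsPath := by
  apply Walk.IsPath.mk'
  rw [support_ccw]
  refine List.Nodup.map_on ?_ List.nodup_range
  intro x hx y hy hxy
  rw [List.mem_range] at hx hy
  have h2 : (x : Fin n) = y := by
    have := congrArg (fun z => u - z) hxy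
    simpa using sub_right_injective hxy
  exact natCast_fin_inj (by omega) (by omega) h2



lemma parity_val_add (h2 : 2 ∣ n) (u : Fin n) (m : ℕ) :
    (u + (m : Fin n)).val % 2 = (u.val + m) % 2 := by
  rw [Fin.add_def, Fin.val_natCast]
  rw [Nat.mod_mod_of_dvd _ h2]
  have h3 := Nat.mod_mod_of_dvd m h2
  omega

lemma parity_val_sub (h2 : 2 ∣ n) (u : Fin n) (m : ℕ) :
    (u - (m : Fin n)).val % 2 = (u.val + m) % 2 := by
  rw [Fin.sub_def, Fin.val_natCast]
  show (n - m % n + u.val) % n % 2 = (u.val + m) % 2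
  rw [Nat.mod_mod_of_dvd _ h2]
  have h3 := Nat.mod_mod_of_dvd m h2
  have h4 : m % n < n := Nat.mod_lt _ (NeZero.pos n)
  omega

example (l : List ℕ) (f g : ℕ → ℕ) : List.Forall₂ (· ≤ ·) (l.map f) (l.map g) ↔ ∀ x ∈ l, f x ≤ g x := by
  rw [List.forall₂_map_right_iff, List.forall₂_map_left_iff, List.forall₂_same]


section Lab
variable (d : ℕ) [NeZero d]

/-- The optimal labeling of `C_{2d}`. -/
def lab2 : Sym2 (Fin (2*d)) → Finset ℕ :=
  fun e => (Finset.Icc 1 d).filter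
    (fun t => ∃ a : Fin (2*d), e = s(a, a+1) ∧ t % 2 = (a+1).val % 2)

variable {d}

lemma mem_lab2 {e : Sym2 (Fin (2*d))} {t : ℕ} :
    t ∈ lab2 d e ↔ (1 ≤ t ∧ t ≤ d) ∧
      ∃ a : Fin (2*d), e = s(a, a+1) ∧ t % 2 = (a+1).val % 2 := by
  simp [lab2, Finset.mem_filter, Finset.mem_Icc]

lemma reach_cw (hd : 3 ≤ d) (u : Fin (2*d)) (k : ℕ) (hk1 : 1 ≤ k)
    (hk : k + u.val % 2 ≤ d) :
    TemporalReach (cycleGraph (2*d)) (lab2 d) u (u + (k : Fin (2*d))) := by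
  have hn : 2 ≤ 2*d := by omega
  refine ⟨cw hn u k, isPath_cw hn u k (by omega),
    (List.range k).map (fun j : ℕ => j + (1 + u.val % 2)), ?_, ?_⟩
  · refine List.isChain_iff_pairwise.mpr ?_
    exact (List.pairwise_lt_range (n := k)).map _ (fun a b h => by omega)
  · rw [edges_cw, List.forall₂_map_right_iff, List.forall₂_map_left_iff, List.forall₂_same]
    intro j hj
    rw [List.mem_range] at hj
    rw [mem_lab2]
    refine ⟨⟨by omega, by omega⟩, u + (j : Fin (2*d)), rfl, ?_⟩
    have he : u + (j : Fin (2*d)) + 1 = u + ((j+1 : ℕ) : Fin (2*d)) := by push_cast; ring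
    rw [he, parity_val_add (by omega) u (j+1)]
    omega

lemma reach_ccw (hd : 3 ≤ d) (u : Fin (2*d)) (k : ℕ) (hk1 : 1 ≤ k)
    (hk : k + (u.val + 1) % 2 ≤ d) :
    TemporalReach (cycleGraph (2*d)) (lab2 d) u (u - (k : Fin (2*d))) := by
  have hn : 2 ≤ 2*d := by omega
  refine ⟨ccw hn u k, isPath_ccw hn u k (by omega),
    (List.range k).map (fun j : ℕ => j + (1 + (u.val + 1) % 2)), ?_, ?_⟩
  · refine List.isChain_iff_pairwise.mpr ?_
    exact (List.pairwise_lt_range (n := k)).map _ (fun a b h => by omega)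
  · rw [edges_ccw, List.forall₂_map_right_iff, List.forall₂_map_left_iff, List.forall₂_same]
    intro j hj
    rw [List.mem_range] at hj
    rw [mem_lab2]
    refine ⟨⟨by omega, by omega⟩, u - ((j+1 : ℕ) : Fin (2*d)), ?_, ?_⟩
    · have h1 : u - ((j+1 : ℕ) : Fin (2*d)) + 1 = u - (j : Fin (2*d)) := by push_cast; ring
      have h2 : u - ((j+1 : ℕ) : Fin (2*d)) = u - (j : Fin (2*d)) - 1 := by push_cast; ring
      rw [h1, ← h2, Sym2.eq_swap]
    · have h1 : u - ((j+1 : ℕ) : Fin (2*d)) + 1 = u - (j : Fin (2*d)) := by push_cast; ring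
      rw [h1, parity_val_sub (by omega) u j]
      omega

lemma tc_lab2 (hd : 3 ≤ d) : TemporallyConnected (cycleGraph (2*d)) (lab2 d) := by
  intro u v huv
  have hvu : v - u ≠ 0 := sub_ne_zero_of_ne (Ne.symm huv)
  set m := (v - u).val with hm
  have hm1 : 1 ≤ m := by
    rcases Nat.eq_zero_or_pos m with h | h
    · exact absurd (Fin.ext (by simp [← hm, h])) hvu
    · exact h
  have hm2 : m < 2*d := (v - u).isLt
  have hveq : v = u + (m : Fin (2*d)) := by
    rw [hm, Fin.cast_val_eq_self]; ring
  have hveq2 : v = u - ((2*d - m : ℕ) : Fin (2*d)) := by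
    have hz : ((2*d - m : ℕ) : Fin (2*d)) = -(m : Fin (2*d)) := by
      apply eq_neg_of_add_eq_zero_left
      rw [← Nat.cast_add]
      have he : 2*d - m + m = 2*d := by omega
      rw [he, Fin.natCast_self]
    rw [hveq, hz]; ring
  by_cases hpar : u.val % 2 = 0
  · by_cases hmd : m ≤ d
    · rw [hveq]; exact reach_cw hd u m hm1 (by omega)
    · rw [hveq2]; exact reach_ccw hd u (2*d - m) (by omega) (by omega)
  · by_cases hmd : m ≤ d - 1
    · rw [hveq]; exact reach_cw hd u m hm1 (by omega)
    · rw [hveq2]; exact reach_ccw hd u (2*d - m) (by omega) (by omega)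

lemma lab2_valid (hd : 3 ≤ d) : ValidLabeling (cycleGraph (2*d)) (lab2 d) := by
  constructor
  · intro e he
    rw [Finset.eq_empty_iff_forall_notMem]
    intro t ht
    rw [mem_lab2] at ht
    obtain ⟨-, a, rfl, -⟩ := ht
    exact he ((cycleGraph (2*d)).mem_edgeSet.mpr (adj_succ (by omega) a))
  · intro e t ht
    exact (mem_lab2.mp ht).1.1

lemma lab2_age (e : Sym2 (Fin (2*d))) (t : ℕ) (ht : t ∈ lab2 d e) : t ≤ d :=
  (mem_lab2.mp ht).1.2
end Lab

section Sum
variable {d : ℕ} [NeZero d]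

lemma canon (hd : 3 ≤ d) {a b : Fin (2*d)} (h : s(a, a+1) = s(b, b+1)) : a = b := by
  rw [Sym2.eq_iff] at h
  rcases h with ⟨h1, -⟩ | ⟨h1, h2⟩
  · exact h1
  · exfalso
    rw [h1] at h2
    have h3 : b + ((2:ℕ) : Fin (2*d)) = b + 0 := by
      push_cast
      rw [add_zero, show (b + 2 : Fin (2*d)) = b + 1 + 1 from by ring]
      exact h2
    have h4 := add_left_cancel h3
    have h5 : ((2:ℕ) : Fin (2*d)) = ((0:ℕ) : Fin (2*d)) := by rw [h4]; simp
    have := natCast_fin_inj (n := 2*d) (by omega) (by omega) h5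
    omega

lemma card_even_fin : (Finset.univ.filter (fun b : Fin (2*d) => b.val % 2 = 0)).card
    = d := by
  have hc : (Finset.univ.filter (fun b : Fin (2*d) => b.val % 2 = 0)).card
      = (Finset.univ : Finset (Fin d)).card := by
    refine Finset.card_bij' (fun (b : Fin (2*d)) _ => (⟨b.val / 2, by have := b.isLt; omega⟩ : Fin d))
      (fun (c : Fin d) _ => (⟨2 * c.val, by have := c.isLt; omega⟩ : Fin (2*d))) ?_ ?_ ?_ ?_
    · intro a ha; exact Finset.mem_univ _
    · intro c hc; simp only [Finset.mem_filter]; exact ⟨Finset.mem_univ _, by omega⟩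
    · intro a ha
      have h2 := (Finset.mem_filter.mp ha).2
      apply Fin.ext; simp; try omega
    · intro c hc; apply Fin.ext; simp; try omega
  rw [hc]; simp

lemma card_odd_fin : (Finset.univ.filter (fun b : Fin (2*d) => ¬ b.val % 2 = 0)).card
    = d := by
  have hc : (Finset.univ.filter (fun b : Fin (2*d) => ¬ b.val % 2 = 0)).card
      = (Finset.univ : Finset (Fin d)).card := by
    refine Finset.card_bij' (fun (b : Fin (2*d)) _ => (⟨b.val / 2, by have := b.isLt; omega⟩ : Fin d))
      (fun (c : Fin d) _ => (⟨2 * c.val + 1, by have := c.isLt; omega⟩ : Fin (2*d))) ?_ ?_ ?_ ?_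
    · intro a ha; exact Finset.mem_univ _
    · intro c hc; simp only [Finset.mem_filter]; exact ⟨Finset.mem_univ _, by omega⟩
    · intro a ha
      have h2 := (Finset.mem_filter.mp ha).2
      apply Fin.ext; simp; try omega
    · intro c hc; apply Fin.ext; simp; try omega
  rw [hc]; simp

lemma lab2_sum (hd : 3 ≤ d) : ∑ e : Sym2 (Fin (2*d)), (lab2 d e).card = d^2 := by
  classical
  have hinj : ∀ a ∈ (Finset.univ : Finset (Fin (2*d))), ∀ b ∈ Finset.univ,
      s(a, a+1) = s(b, b+1) → a = b := fun a _ b _ h => canon hd h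
  have h2 : ∑ e : Sym2 (Fin (2*d)), (lab2 d e).card
      = ∑ e ∈ Finset.univ.image (fun a : Fin (2*d) => s(a, a+1)), (lab2 d e).card := by
    refine (Finset.sum_subset (Finset.subset_univ _) ?_).symm
    intro e _ he
    rw [Finset.card_eq_zero, Finset.eq_empty_iff_forall_notMem]
    intro t ht
    obtain ⟨-, a, rfl, -⟩ := mem_lab2.mp ht
    exact he (Finset.mem_image.mpr ⟨a, Finset.mem_univ _, rfl⟩)
  rw [h2, Finset.sum_image hinj]
  have hcard : ∀ a : Fin (2*d), (lab2 d s(a, a+1)).card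
      = ((Finset.Icc 1 d).filter (fun t => t % 2 = (a+1).val % 2)).card := by
    intro a
    congr 1
    ext t
    rw [mem_lab2, Finset.mem_filter, Finset.mem_Icc]
    constructor
    · rintro ⟨hb, b, he, hp⟩
      have := canon hd he
      subst this
      exact ⟨hb, hp⟩
    · rintro ⟨hb, hp⟩
      exact ⟨hb, a, rfl, hp⟩
  simp only [hcard]
  have hre : ∑ a : Fin (2*d), ((Finset.Icc 1 d).filter (fun t => t % 2 = (a+1).val % 2)).card
      = ∑ b : Fin (2*d), ((Finset.Icc 1 d).filter (fun t => t % 2 = b.val % 2)).card := by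
    exact Fintype.sum_bijective (fun a : Fin (2*d) => a + 1)
      (Equiv.addRight (1 : Fin (2*d))).bijective _ _ (fun a => rfl)
  rw [hre]
  have hsplit := Finset.sum_filter_add_sum_filter_not (Finset.univ : Finset (Fin (2*d)))
    (fun b => b.val % 2 = 0)
    (fun b : Fin (2*d) => ((Finset.Icc 1 d).filter (fun t => t % 2 = b.val % 2)).card)
  have heven : ∑ b ∈ Finset.univ.filter (fun b : Fin (2*d) => b.val % 2 = 0),
      ((Finset.Icc 1 d).filter (fun t => t % 2 = b.val % 2)).card
      = d * ((Finset.Icc 1 d).filter (fun t => t % 2 = 0)).card := by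
    rw [Finset.sum_congr rfl (fun b hb => by rw [(Finset.mem_filter.mp hb).2]),
      Finset.sum_const, card_even_fin, smul_eq_mul]
  have hodd : ∑ b ∈ Finset.univ.filter (fun b : Fin (2*d) => ¬ b.val % 2 = 0),
      ((Finset.Icc 1 d).filter (fun t => t % 2 = b.val % 2)).card
      = d * ((Finset.Icc 1 d).filter (fun t => t % 2 = 1)).card := by
    rw [Finset.sum_congr rfl (fun b hb => by
        have h3 := (Finset.mem_filter.mp hb).2
        have h4 : b.val % 2 = 1 := by omega
        rw [h4]),
      Finset.sum_const, card_odd_fin, smul_eq_mul]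
  have hFsum : ((Finset.Icc 1 d).filter (fun t => t % 2 = 0)).card
      + ((Finset.Icc 1 d).filter (fun t => t % 2 = 1)).card = d := by
    have h5 : ((Finset.Icc 1 d).filter (fun t => t % 2 = 1)).card
        = ((Finset.Icc 1 d).filter (fun t => ¬ t % 2 = 0)).card := by
      congr 1
      ext t
      simp only [Finset.mem_filter]
      constructor
      · rintro ⟨h, h'⟩; exact ⟨h, by omega⟩
      · rintro ⟨h, h'⟩; exact ⟨h, by omega⟩
    rw [h5, Finset.card_filter_add_card_filter_not, Nat.card_Icc]
    omega
  rw [← hsplit, heven, hodd, ← Nat.mul_add, hFsum, sq]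
end Sum

section Lower
variable {d : ℕ} [NeZero d]

lemma edges_get_eq {V' : Type*} {G : SimpleGraph V'} {u v : V'} (p : G.Walk u v) (j : ℕ)
    (h : j < p.edges.length) :
    p.edges.get ⟨j, h⟩ = s(p.getVert j, p.getVert (j+1)) := by
  induction p generalizing j with
  | nil => simp at h
  | cons ha q ih =>
    cases j with
    | zero => simp [Walk.edges_cons, Walk.getVert_zero, Walk.getVert_cons_succ]
    | succ j =>
      have h' : j < q.edges.length := by
        simpa [Walk.edges_cons] using h
      have := ih j h'
      simpa [Walk.edges_cons, Walk.getVert_cons_succ] using this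

lemma pairwise_getD (l : List ℕ) (h : l.Pairwise (· < ·)) (a k : ℕ) (hk : a + k < l.length) :
    l.getD a 0 + k ≤ l.getD (a+k) 0 := by
  induction k with
  | zero => simp
  | succ k ih =>
    have h1 := ih (by omega)
    have h2 : l.getD (a+k) 0 < l.getD (a+k+1) 0 := by
      rw [List.getD_eq_getElem l 0 (show a+k < l.length by omega),
        List.getD_eq_getElem l 0 (show a+k+1 < l.length by omega)]
      exact List.pairwise_iff_getElem.mp h (a+k) (a+k+1) (by omega) (by omega) (by omega)
    have h3 : a + (k+1) = a + k + 1 := by omega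
    rw [h3]
    omega

lemma val_d : ((d : ℕ) : Fin (2*d)).val = d := by
  rw [Fin.val_natCast, Nat.mod_eq_of_lt (by have := Nat.pos_of_ne_zero (NeZero.ne d); omega)]

lemma cdist_antipodal (i : Fin (2*d)) : cdist i (i + ((d:ℕ) : Fin (2*d))) = d := by
  have hdpos := Nat.pos_of_ne_zero (NeZero.ne d)
  have h1 : i + ((d:ℕ) : Fin (2*d)) - i = ((d:ℕ) : Fin (2*d)) := by ring
  have h2 : i - (i + ((d:ℕ) : Fin (2*d))) = 0 - ((d:ℕ) : Fin (2*d)) := by ring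
  have h3 : (0 - ((d:ℕ) : Fin (2*d))).val = d := by
    rw [Fin.sub_def]
    show (2*d - ((d:ℕ) : Fin (2*d)).val + (0 : Fin (2*d)).val) % (2*d) = d
    rw [val_d]
    simp only [Fin.val_zero]
    rw [Nat.add_zero]
    have : 2*d - d = d := by omega
    rw [this, Nat.mod_eq_of_lt (by omega)]
  unfold cdist
  rw [h1, h2, h3, val_d]
  exact Nat.min_self d

lemma cdist_cases {u x : Fin (2*d)} {j : ℕ} (hj : j ≤ d) (h : cdist u x = j) :
    x = u + (j : Fin (2*d)) ∨ x = u - (j : Fin (2*d)) := by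
  have hdpos := Nat.pos_of_ne_zero (NeZero.ne d)
  have hjv : ((j : ℕ) : Fin (2*d)).val = j := by
    rw [Fin.val_natCast, Nat.mod_eq_of_lt (by omega)]
  have hcase : (x - u).val = j ∨ (u - x).val = j := by
    unfold cdist at h
    rcases min_cases (x - u).val (u - x).val with ⟨h1, -⟩ | ⟨h1, -⟩
    · left; omega
    · right; omega
  rcases hcase with h1 | h1
  · left
    have : x - u = (j : Fin (2*d)) := Fin.ext (by rw [hjv]; exact h1)
    have h2 : x = u + (x - u) := by ring
    rw [h2, this]
  · right
    have : u - x = (j : Fin (2*d)) := Fin.ext (by rw [hjv]; exact h1)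
    have h2 : x = u - (u - x) := by ring
    rw [h2, this]

end Lower

section Lower2
variable {d : ℕ} [NeZero d]

lemma key_class (hd : 3 ≤ d) {i x y : Fin (2*d)} {t : ℕ} (ht1 : 1 ≤ t) (ht2 : t ≤ d)
    (hx : x = i + ((t-1 : ℕ) : Fin (2*d)) ∨ x = i - ((t-1 : ℕ) : Fin (2*d)))
    (hy : y = i + ((t : ℕ) : Fin (2*d)) ∨ y = i - ((t : ℕ) : Fin (2*d)))
    (hadj : (cycleGraph (2*d)).Adj x y) :
    ∃ a : Fin (2*d), s(x, y) = s(a, a+1) ∧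
      (i = a - ((t-1 : ℕ) : Fin (2*d)) ∨ i = a + ((t : ℕ) : Fin (2*d))) := by
  have hcast : ((t-1 : ℕ) : Fin (2*d)) = ((t : ℕ) : Fin (2*d)) - 1 := by
    rw [Nat.cast_sub ht1, Nat.cast_one]
  have hone : ((1:ℕ) : Fin (2*d)).val = 1 := by
    rw [Fin.val_natCast]; exact Nat.mod_eq_of_lt (by omega)
  have hadj' := (cycleGraph_adj').mp hadj
  have hdir : x = y + 1 ∨ y = x + 1 := by
    rcases hadj' with h | h
    · left
      have h1 : x - y = ((1:ℕ) : Fin (2*d)) := Fin.ext (by rw [hone]; exact h)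
      have h2 : x = y + (x - y) := by ring
      rw [h2, h1]; push_cast; ring
    · right
      have h1 : y - x = ((1:ℕ) : Fin (2*d)) := Fin.ext (by rw [hone]; exact h)
      have h2 : y = x + (y - x) := by ring
      rw [h2, h1]; push_cast; ring
  rcases hdir with hdir | hdir
  · -- x = y + 1 : candidate a = y
    rcases hy with hy | hy
    · -- y = i + t : need degenerate analysis
      rcases hx with hx | hx
      · -- x = i + (t-1) : i + (t-1) = i + t + 1 ⇒ t-1 = t+1 mod 2d : contradiction
        exfalso
        have he : i + ((t-1 : ℕ) : Fin (2*d)) = i + ((t:ℕ) : Fin (2*d)) + 1 := by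
          rw [← hx, hdir, hy]
        have h20 : ((t-1 : ℕ) : Fin (2*d)) = ((t+1 : ℕ) : Fin (2*d)) := by
          rw [hcast] at he ⊢
          push_cast
          linear_combination he
        have := natCast_fin_inj (n := 2*d) (by omega) (by omega) h20
        omega
      · -- x = i - (t-1) : i - (t-1) = i + t + 1 ⇒ 2t ≡ 0 ⇒ t = d
        have he : i - ((t-1 : ℕ) : Fin (2*d)) = i + ((t:ℕ) : Fin (2*d)) + 1 := by
          rw [← hx, hdir, hy]
        rw [hcast] at he
        have h20 : ((2*t : ℕ) : Fin (2*d)) = ((0:ℕ) : Fin (2*d)) := by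
          push_cast
          linear_combination - he
        have h2t : 2*t = 2*d := by
          rcases lt_or_eq_of_le (show 2*t ≤ 2*d by omega) with h | h
          · have := natCast_fin_inj (n := 2*d) h (by omega) h20
            omega
          · exact h
        have htd : t = d := by omega
        have hdd : ((t:ℕ) : Fin (2*d)) + ((t:ℕ) : Fin (2*d)) = 0 := by
          rw [← Nat.cast_add, show t + t = 2*d by omega, Fin.natCast_self]
        have hy2 : y = i - ((t:ℕ) : Fin (2*d)) := by
          rw [hy]; linear_combination hdd
        refine ⟨y, ?_, Or.inr (by rw [hy2]; ring)⟩
        rw [show y + 1 = x from hdir.symm, Sym2.eq_swap]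
    · -- y = i - t : a := y works
      refine ⟨y, ?_, Or.inr (by rw [hy]; ring)⟩
      rw [show y + 1 = x from hdir.symm, Sym2.eq_swap]
  · -- y = x + 1 : candidate a = x
    rcases hx with hx | hx
    · -- x = i + (t-1) : a := x works
      refine ⟨x, by rw [hdir], Or.inl (by rw [hx]; ring)⟩
    · -- x = i - (t-1)
      rcases hy with hy | hy
      · -- y = i + t : i + t = i - (t-1) + 1 ⇒ 2(t-1) ≡ 0 ⇒ t = 1 or t-1 = d
        have he : i + ((t:ℕ) : Fin (2*d)) = i - ((t-1 : ℕ) : Fin (2*d)) + 1 := by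
          rw [← hy, hdir, hx]
        rw [hcast] at he
        have h20 : ((2*(t-1) : ℕ) : Fin (2*d)) = ((0:ℕ) : Fin (2*d)) := by
          push_cast [Nat.cast_sub ht1]
          linear_combination he
        rcases lt_or_eq_of_le (show 2*(t-1) ≤ 2*d by omega) with h | h
        · -- 2(t-1) < 2d ⇒ t = 1
          have := natCast_fin_inj (n := 2*d) h (by omega) h20
          have ht1' : t = 1 := by omega
          refine ⟨x, by rw [hdir], Or.inl ?_⟩
          rw [hx, ht1']
          simp
        · -- t - 1 = d, impossible since t ≤ d and t ≥ 1, unless t = d+1; so t-1 = d ⇒ t = d+1 > d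
          exfalso; omega
      · -- y = i - t : x = i - (t-1) = y + 1... check: y = x + 1 and y = i - t:
        -- i - t = i - (t-1) + 1 ⇒ ↑(2(t-1)) = ... compute: -(t) - (-(t-1) + 1) = -t + t - 1 - 1 = -2
        have he : i - ((t:ℕ) : Fin (2*d)) = i - ((t-1 : ℕ) : Fin (2*d)) + 1 := by
          rw [← hy, hdir, hx]
        rw [hcast] at he
        have h20 : ((2 : ℕ) : Fin (2*d)) = ((0:ℕ) : Fin (2*d)) := by
          push_cast
          linear_combination - he
        have := natCast_fin_inj (n := 2*d) (by omega) (by omega) h20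
        omega

end Lower2

section Lower3
variable {d : ℕ} [NeZero d]

lemma key (hd : 3 ≤ d) {lab : Sym2 (Fin (2*d)) → Finset ℕ}
    (hv : ValidLabeling (cycleGraph (2*d)) lab)
    (hage : ∀ e, ∀ t ∈ lab e, t ≤ d)
    (hc : TemporallyConnected (cycleGraph (2*d)) lab)
    {t : ℕ} (ht1 : 1 ≤ t) (ht2 : t ≤ d) (i : Fin (2*d)) :
    ∃ a : Fin (2*d), t ∈ lab s(a, a+1) ∧
      (i = a - ((t-1 : ℕ) : Fin (2*d)) ∨ i = a + ((t : ℕ) : Fin (2*d))) := by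
  have hdpos : 0 < d := by omega
  have hne : i ≠ i + ((d:ℕ) : Fin (2*d)) := by
    intro h
    have h1 : ((d:ℕ) : Fin (2*d)) = 0 := by
      have := congrArg (fun z => z - i) h
      simpa using this.symm
    have := natCast_fin_inj (n := 2*d) (by omega) (by omega)
      (h1.trans (by simp) : ((d:ℕ) : Fin (2*d)) = ((0:ℕ) : Fin (2*d)))
    omega
  obtain ⟨p, hp, ts, hch, hf⟩ := hc i (i + ((d:ℕ) : Fin (2*d))) hne
  have hlen : ts.length = p.length := by rw [hf.length_eq, Walk.length_edges]
  have hdist : cdist i (i + ((d:ℕ) : Fin (2*d))) = d := cdist_antipodal i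
  have hplen_ge : d ≤ p.length := by
    have := cdist_le_length p
    omega
  obtain ⟨hleq, hR⟩ := List.forall₂_iff_get.mp hf
  have hmem : ∀ j, j < ts.length → 1 ≤ ts.getD j 0 ∧ ts.getD j 0 ≤ d := by
    intro j hj
    have hR' := hR j hj (by omega)
    rw [List.getD_eq_getElem ts 0 hj]
    exact ⟨hv.2 _ _ hR', hage _ _ hR'⟩
  have hpw := List.isChain_iff_pairwise.mp hch
  have hlast : ts.length ≤ d := by
    by_contra hcon
    push_neg at hcon
    have h1 := pairwise_getD ts hpw 0 (ts.length - 1) (by omega)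
    rw [Nat.zero_add] at h1
    have h2 := (hmem 0 (by omega)).1
    have h3 := (hmem (ts.length - 1) (by omega)).2
    omega
  have hlen_eq : p.length = d := by omega
  have hts_len : ts.length = d := by omega
  have hval : ts.getD (t-1) 0 = t := by
    have hg1 := pairwise_getD ts hpw 0 (t-1) (by omega)
    rw [Nat.zero_add] at hg1
    have hg2 := pairwise_getD ts hpw (t-1) (d-1-(t-1)) (by omega)
    have hidx : (t-1) + (d-1-(t-1)) = d - 1 := by omega
    rw [hidx] at hg2
    have h2 := (hmem 0 (by omega)).1
    have h3 := (hmem (d-1) (by omega)).2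
    omega
  have hR2 := hR (t-1) (by omega) (by omega)
  have hedge := edges_get_eq p (t-1) (by omega)
  have hR3 : t ∈ lab s(p.getVert (t-1), p.getVert (t-1+1)) := by
    rw [← hedge]
    have hget : ts.get ⟨t-1, (by omega : t-1 < ts.length)⟩ = t := by
      rw [List.get_eq_getElem, ← List.getD_eq_getElem ts 0 (by omega)]
      exact hval
    rwa [hget] at hR2
  have hpos : ∀ j, j ≤ d →
      (p.getVert j = i + ((j:ℕ) : Fin (2*d)) ∨ p.getVert j = i - ((j:ℕ) : Fin (2*d))) := by
    intro j hj
    have hle := cdist_getVert_le p j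
    have hsuf : cdist (p.getVert j) (i + ((d:ℕ) : Fin (2*d))) ≤ d - j := by
      have := cdist_getVert_suffix_le p j
      rwa [hlen_eq] at this
    have htr := cdist_triangle i (p.getVert j) (i + ((d:ℕ) : Fin (2*d)))
    have hcd : cdist i (p.getVert j) = j := by omega
    exact cdist_cases (by omega) hcd
  have hx := hpos (t-1) (by omega)
  have hy := hpos t (by omega)
  have hadj : (cycleGraph (2*d)).Adj (p.getVert (t-1)) (p.getVert t) := by
    have := p.adj_getVert_succ (i := t-1) (by omega)
    rwa [show t - 1 + 1 = t by omega] at this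
  have hy' : p.getVert (t-1+1) = p.getVert t := by rw [show t - 1 + 1 = t by omega]
  rw [hy'] at hR3
  obtain ⟨a, hae, hai⟩ := key_class hd ht1 ht2 hx hy hadj
  exact ⟨a, hae ▸ hR3, hai⟩

lemma label_count (hd : 3 ≤ d) {lab : Sym2 (Fin (2*d)) → Finset ℕ}
    (hv : ValidLabeling (cycleGraph (2*d)) lab)
    (hage : ∀ e, ∀ t ∈ lab e, t ≤ d)
    (hc : TemporallyConnected (cycleGraph (2*d)) lab)
    {t : ℕ} (ht1 : 1 ≤ t) (ht2 : t ≤ d) :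
    d ≤ (Finset.univ.filter (fun e : Sym2 (Fin (2*d)) => t ∈ lab e)).card := by
  classical
  choose f hf1 hf2 using key hd hv hage hc ht1 ht2
  set T := (Finset.univ.filter (fun e : Sym2 (Fin (2*d)) => t ∈ lab e)) ×ˢ
    (Finset.univ : Finset Bool) with hT
  have hmaps : ∀ i ∈ (Finset.univ : Finset (Fin (2*d))),
      (s(f i, f i + 1), if i = f i + ((t : ℕ) : Fin (2*d)) then true else false) ∈ T := by
    intro i _
    rw [hT, Finset.mem_product]
    exact ⟨Finset.mem_filter.mpr ⟨Finset.mem_univ _, hf1 i⟩, Finset.mem_univ _⟩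
  have hinj : Set.InjOn
      (fun i : Fin (2*d) => (s(f i, f i + 1), if i = f i + ((t : ℕ) : Fin (2*d)) then true else false))
      (Finset.univ : Finset (Fin (2*d))) := by
    intro i _ i' _ hii
    simp only [Prod.mk.injEq] at hii
    obtain ⟨he, hb⟩ := hii
    have hff : f i = f i' := canon hd he
    by_cases hcase : i = f i + ((t : ℕ) : Fin (2*d))
    · by_cases hcase' : i' = f i' + ((t : ℕ) : Fin (2*d))
      · rw [hcase, hcase', hff]
      · rw [if_pos hcase, if_neg hcase'] at hb
        exact absurd hb (by simp)
    · by_cases hcase' : i' = f i' + ((t : ℕ) : Fin (2*d))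
      · rw [if_neg hcase, if_pos hcase'] at hb
        exact absurd hb (by simp)
      · have h1 : i = f i - ((t-1 : ℕ) : Fin (2*d)) := (hf2 i).resolve_right hcase
        have h2 : i' = f i' - ((t-1 : ℕ) : Fin (2*d)) := (hf2 i').resolve_right hcase'
        rw [h1, h2, hff]
  have hcard := Finset.card_le_card_of_injOn _ hmaps hinj
  rw [hT, Finset.card_product] at hcard
  simp only [Finset.card_univ, Fintype.card_fin, Fintype.card_bool] at hcard
  omega

lemma lower (hd : 3 ≤ d) (lab : Sym2 (Fin (2*d)) → Finset ℕ)
    (hv : ValidLabeling (cycleGraph (2*d)) lab)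
    (hage : ∀ e, ∀ t ∈ lab e, t ≤ d)
    (hc : TemporallyConnected (cycleGraph (2*d)) lab) :
    d^2 ≤ ∑ e : Sym2 (Fin (2*d)), (lab e).card := by
  classical
  have h1 : ∀ e : Sym2 (Fin (2*d)), (lab e).card
      = ∑ t ∈ Finset.Icc 1 d, if t ∈ lab e then 1 else 0 := by
    intro e
    rw [← Finset.card_filter]
    congr 1
    ext x
    rw [Finset.mem_filter, Finset.mem_Icc]
    exact ⟨fun h => ⟨⟨hv.2 e x h, hage e x h⟩, h⟩, fun h => h.2⟩
  calc d^2 = ∑ _t ∈ Finset.Icc 1 d, d := by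
        rw [Finset.sum_const, Nat.card_Icc, smul_eq_mul, sq,
          show d + 1 - 1 = d from by omega]
    _ ≤ ∑ t ∈ Finset.Icc 1 d, (Finset.univ.filter (fun e : Sym2 (Fin (2*d)) => t ∈ lab e)).card := by
        refine Finset.sum_le_sum ?_
        intro t ht
        rw [Finset.mem_Icc] at ht
        exact label_count hd hv hage hc ht.1 ht.2
    _ = ∑ t ∈ Finset.Icc 1 d, ∑ e : Sym2 (Fin (2*d)), (if t ∈ lab e then 1 else 0) := by
        refine Finset.sum_congr rfl ?_
        intro t _
        rw [Finset.card_filter]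
    _ = ∑ e : Sym2 (Fin (2*d)), ∑ t ∈ Finset.Icc 1 d, (if t ∈ lab e then 1 else 0) :=
        Finset.sum_comm
    _ = ∑ e : Sym2 (Fin (2*d)), (lab e).card := by
        refine Finset.sum_congr rfl ?_
        intro e _
        rw [h1]

end Lower3

end CycleTemp

/-- For the even cycle `C_{2d}` (with `d ≥ 3`, i.e. `n = 2d ≠ 4`), the minimum total
number of labels of a temporally connecting labeling of age at most `d` equals `d²`. -/
theorem stmt1 (d : ℕ) (hd : 3 ≤ d) :
    IsLeast {k : ℕ | ∃ lab : Sym2 (Fin (2 * d)) → Finset ℕ,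
      ValidLabeling (SimpleGraph.cycleGraph (2 * d)) lab ∧
      (∀ e, ∀ t ∈ lab e, t ≤ d) ∧
      TemporallyConnected (SimpleGraph.cycleGraph (2 * d)) lab ∧
      ∑ e : Sym2 (Fin (2 * d)), (lab e).card = k} (d ^ 2) := by
  haveI : NeZero d := ⟨by omega⟩
  constructor
  · exact ⟨CycleTemp.lab2 d, CycleTemp.lab2_valid hd, fun e t ht => CycleTemp.lab2_age e t ht,
      CycleTemp.tc_lab2 hd, CycleTemp.lab2_sum hd⟩
  · rintro k ⟨lab, hv, hage, hc, rfl⟩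
    exact CycleTemp.lower hd lab hv hage hc
end

section
/- Let d ≥ 1 and let C_{2d+1} be the cycle graph on n = 2d+1 vertices, whose diameter is d. Then the minimum total number of labels |λ| over all time-labelings λ of C_{2d+1} with age at most d such that (C_{2d+1},λ) is temporally connected equals 2d² + d. -/
open scoped Classical


variable {V : Type*}

section Stmt2Aux

open SimpleGraph List
open Fin.CommRing Fin.NatCast

lemma fin_cast_inj' {n a b : ℕ} [NeZero n] (ha : a < n) (hb : b < n)
    (h : (a : Fin n) = (b : Fin n)) : a = b := by
  have := congrArg Fin.val h
  rwa [Fin.val_natCast, Fin.val_natCast, Nat.mod_eq_of_lt ha, Nat.mod_eq_of_lt hb] at this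

lemma cyc_adj_succ {n : ℕ} [NeZero n] (hn : 2 ≤ n) (u : Fin n) :
    (cycleGraph n).Adj u (u + 1) := by
  rw [cycleGraph_adj']
  right
  rw [add_sub_cancel_left, Fin.val_one', Nat.mod_eq_of_lt hn]

lemma cyc_adj_cases {n : ℕ} [NeZero n] (hn : 2 ≤ n) {u w : Fin n}
    (h : (cycleGraph n).Adj u w) : w = u + 1 ∨ u = w + 1 := by
  rw [cycleGraph_adj'] at h
  have h1 : (1 : Fin n).val = 1 := by rw [Fin.val_one', Nat.mod_eq_of_lt hn]
  rcases h with h | h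
  · right
    have : u - w = 1 := Fin.ext (by rw [h, h1])
    linear_combination this
  · left
    have : w - u = 1 := Fin.ext (by rw [h, h1])
    linear_combination this

/-- The forward walk of length `k` from `u` around the cycle. -/
def cycWalk {n : ℕ} [NeZero n] (hn : 2 ≤ n) : ∀ (k : ℕ) (u : Fin n),
    (cycleGraph n).Walk u (u + (k : Fin n))
  | 0, u => Walk.nil.copy rfl (by simp)
  | (k+1), u => (Walk.cons (cyc_adj_succ hn u) (cycWalk hn k (u+1))).copy rfl
      (by push_cast; ring)

lemma cycWalk_length {n : ℕ} [NeZero n] (hn : 2 ≤ n) :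
    ∀ (k : ℕ) (u : Fin n), (cycWalk hn k u).length = k
  | 0, u => by simp [cycWalk]
  | (k+1), u => by simp [cycWalk, cycWalk_length hn k]

lemma cycWalk_support {n : ℕ} [NeZero n] (hn : 2 ≤ n) :
    ∀ (k : ℕ) (u : Fin n), (cycWalk hn k u).support
      = (List.range (k+1)).map (fun j : ℕ => u + (j : Fin n))
  | 0, u => by simp [cycWalk, List.range_succ]
  | (k+1), u => by
      rw [cycWalk, Walk.support_copy, Walk.support_cons, cycWalk_support hn k (u+1),
        List.range_succ_eq_map (n := k+1)]
      simp only [List.map_cons, List.map_map]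
      congr 1
      · simp
      · congr 1
        funext j
        simp only [Function.comp_apply, Nat.succ_eq_add_one]
        push_cast
        ring

lemma cycWalk_isPath {n : ℕ} [NeZero n] (hn : 2 ≤ n) (k : ℕ) (hk : k < n) (u : Fin n) :
    (cycWalk hn k u).IsPath := by
  rw [Walk.isPath_def, cycWalk_support hn k u]
  refine (List.nodup_range (n := k+1)).map_on ?_
  intro a ha b hb hab
  rw [List.mem_range] at ha hb
  have : (a : Fin n) = (b : Fin n) := add_left_cancel hab
  exact fin_cast_inj' (by omega) (by omega) this

/-- Counting: a walk from `u` to `v` has `v = u + a - b` with `a + b` its length. -/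
lemma cyc_walk_offset {n : ℕ} [NeZero n] (hn : 2 ≤ n) {u v : Fin n}
    (p : (cycleGraph n).Walk u v) :
    ∃ a b : ℕ, a + b = p.length ∧ v = u + (a : Fin n) - (b : Fin n) := by
  induction p with
  | nil => exact ⟨0, 0, by simp⟩
  | cons h q ih =>
    obtain ⟨a, b, hab, hv⟩ := ih
    rcases cyc_adj_cases hn h with hw | hw
    · refine ⟨a + 1, b, by simp [← hab, Walk.length_cons]; ring, ?_⟩
      rw [hv, hw]; push_cast; ring
    · refine ⟨a, b + 1, by simp [← hab, Walk.length_cons]; ring, ?_⟩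
      rw [hv, hw]; push_cast; ring

/-- Rigidity: a walk of length at most `m ≤ d` from `u` to `u + m` in `C_{2d+1}`
must be the forward geodesic. -/
lemma cyc_walk_edges_forced {d : ℕ} (hd : 1 ≤ d) :
    ∀ {u v : Fin (2*d+1)} (p : (cycleGraph (2*d+1)).Walk u v) (m : ℕ), m ≤ d →
      v = u + (m : Fin (2*d+1)) → p.length ≤ m →
      p.edges = (List.range m).map
        (fun j : ℕ => s(u + (j : Fin (2*d+1)), u + (j : Fin (2*d+1)) + 1)) := by
  haveI : NeZero (2*d+1) := ⟨by omega⟩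
  intro u v p
  induction p with
  | nil =>
    intro m hm hv _
    have h0 : (m : Fin (2*d+1)) = ((0:ℕ) : Fin (2*d+1)) := by
      have h := hv.symm
      rw [add_eq_left] at h
      rw [h]; push_cast; ring
    have : m = 0 := fin_cast_inj' (by omega) (by omega) h0
    subst this
    simp
  | @cons u w v h q ih =>
    intro m hm hv hlen
    have hn2 : 2 ≤ 2*d+1 := by omega
    rw [Walk.length_cons] at hlen
    obtain ⟨m', rfl⟩ : ∃ m', m = m' + 1 := ⟨m - 1, by omega⟩
    rcases cyc_adj_cases hn2 h with hw | hw
    · have hv' : v = w + (m' : Fin (2*d+1)) := by rw [hv, hw]; push_cast; ring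
      have he := ih m' (by omega) hv' (by omega)
      rw [Walk.edges_cons, he, List.range_succ_eq_map (n := m')]
      simp only [List.map_cons, List.map_map]
      congr 1
      · rw [hw]; push_cast; congr 1 <;> ring_nf
      · congr 1
        funext j
        simp only [Function.comp_apply, Nat.succ_eq_add_one, hw]
        push_cast
        congr 1 <;> ring_nf
    · exfalso
      obtain ⟨a, b, hab, hq⟩ := cyc_walk_offset hn2 q
      have key : ((m' + 2 + b : ℕ) : Fin (2*d+1)) = ((a : ℕ) : Fin (2*d+1)) := by
        rw [hv, hw] at hq
        push_cast
        push_cast at hq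
        linear_combination hq
      have h1 : m' + 2 + b = a := fin_cast_inj' (by omega) (by omega) key
      omega

lemma chain_get_le {l : List ℕ} (h : l.Chain' (· < ·)) :
    ∀ (k i : ℕ) (hik : i + k < l.length),
      l.get ⟨i, by omega⟩ + k ≤ l.get ⟨i + k, hik⟩ := by
  intro k
  induction k with
  | zero => intro i hik; simp
  | succ k ihk =>
    intro i hik
    have h1 : l.get ⟨i, by omega⟩ + k ≤ l.get ⟨i + k, by omega⟩ := ihk i (by omega)
    have h2 : l.get ⟨i + k, by omega⟩ < l.get ⟨i + k + 1, by omega⟩ :=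
      List.isChain_iff_getElem.mp h (i + k) (by omega)
    have h3 : l.get ⟨i + (k + 1), hik⟩ = l.get ⟨i + k + 1, by omega⟩ := rfl
    omega

lemma chain_get_le' {l : List ℕ} (h : l.Chain' (· < ·)) {i j : ℕ}
    (hij : i ≤ j) (hj : j < l.length) :
    l.get ⟨i, by omega⟩ + (j - i) ≤ l.get ⟨j, hj⟩ := by
  have h1 := chain_get_le h (j - i) i (by omega)
  have h2 : (⟨i + (j - i), by omega⟩ : Fin l.length) = ⟨j, hj⟩ :=
    Fin.mk_eq_mk.mpr (by omega)
  rw [h2] at h1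
  exact h1

lemma chain'_range'_lt (s k : ℕ) : (List.range' s k).Chain' (· < ·) := by
  show (List.range' s k).IsChain (· < ·)
  rw [List.isChain_iff_getElem]
  intro i hi
  rw [List.getElem_range', List.getElem_range']
  omega

lemma cyc_edgeFinset {n : ℕ} [NeZero n] (hn : 3 ≤ n) :
    (cycleGraph n).edgeFinset = Finset.univ.image (fun i : Fin n => s(i, i + 1)) := by
  ext e
  simp only [SimpleGraph.mem_edgeFinset, Finset.mem_image, Finset.mem_univ, true_and]
  induction e with
  | _ x y =>
    constructor
    · intro h
      rw [SimpleGraph.mem_edgeSet] at h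
      rcases cyc_adj_cases (by omega) h with hw | hw
      · exact ⟨x, by rw [hw]⟩
      · exact ⟨y, by rw [hw, Sym2.eq_swap]⟩
    · rintro ⟨i, hi⟩
      rw [← hi, SimpleGraph.mem_edgeSet]
      exact cyc_adj_succ (by omega) i

lemma cyc_edge_inj {n : ℕ} [NeZero n] (hn : 3 ≤ n) :
    Function.Injective (fun i : Fin n => s(i, i + 1)) := by
  intro i j hij
  simp only [Sym2.eq_iff] at hij
  rcases hij with ⟨h, _⟩ | ⟨h1, h2⟩
  · exact h
  · exfalso
    have h3 : ((2:ℕ) : Fin n) = ((0:ℕ) : Fin n) := by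
      have : i = i + (1 + 1) := by nth_rewrite 1 [h1, ← h2]; ring
      have h4 := (add_eq_left (a := i) (b := (1 + 1 : Fin n))).mp this.symm
      push_cast; linear_combination h4
    have := fin_cast_inj' (by omega) (by omega) h3
    omega

/-- Any short path yields temporal reachability when all edges carry labels `1..d`. -/
lemma temporalReach_of_path {n d : ℕ} {G : SimpleGraph (Fin n)}
    (lab : Sym2 (Fin n) → Finset ℕ)
    (hlab : ∀ e ∈ G.edgeSet, ∀ t : ℕ, 1 ≤ t → t ≤ d → t ∈ lab e)
    {u v : Fin n} (p : G.Walk u v) (hp : p.IsPath) (hlen : p.length ≤ d) :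
    TemporalReach G lab u v := by
  refine ⟨p, hp, List.range' 1 p.length, chain'_range'_lt _ _, ?_⟩
  rw [List.forall₂_iff_get]
  refine ⟨by rw [List.length_range', Walk.length_edges], ?_⟩
  intro i h1 h2
  rw [List.length_range'] at h1
  simp only [List.get_eq_getElem, List.getElem_range']
  refine hlab _ (p.edges_subset_edgeSet (List.getElem_mem _)) _ (by omega) (by omega)

end Stmt2Aux

open Fin.CommRing Fin.NatCast in
set_option maxHeartbeats 1000000 in
/-- For the odd cycle `C_{2d+1}` (with `d ≥ 1`), the minimum total number of labels of a
temporally connecting labeling of age at most `d` equals `2d² + d`. -/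
theorem stmt2 (d : ℕ) (hd : 1 ≤ d) :
    IsLeast {k : ℕ | ∃ lab : Sym2 (Fin (2 * d + 1)) → Finset ℕ,
      ValidLabeling (SimpleGraph.cycleGraph (2 * d + 1)) lab ∧
      (∀ e, ∀ t ∈ lab e, t ≤ d) ∧
      TemporallyConnected (SimpleGraph.cycleGraph (2 * d + 1)) lab ∧
      ∑ e : Sym2 (Fin (2 * d + 1)), (lab e).card = k} (2 * d ^ 2 + d) := by
  haveI : NeZero (2 * d + 1) := ⟨by omega⟩
  have hn2 : 2 ≤ 2 * d + 1 := by omega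
  have hn3 : 3 ≤ 2 * d + 1 := by omega
  constructor
  · -- membership: label every edge with {1, ..., d}
    refine ⟨fun e => if e ∈ (SimpleGraph.cycleGraph (2 * d + 1)).edgeFinset
        then Finset.Icc 1 d else ∅, ?_, ?_, ?_, ?_⟩
    · constructor
      · intro e he
        dsimp only
        rw [if_neg (by rwa [SimpleGraph.mem_edgeFinset])]
      · intro e t ht
        dsimp only at ht
        split_ifs at ht with h
        · exact (Finset.mem_Icc.mp ht).1
        · simp at ht
    · intro e t ht
      dsimp only at ht
      split_ifs at ht with h
      · exact (Finset.mem_Icc.mp ht).2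
      · simp at ht
    · -- temporal connectivity
      intro u v huv
      have hlab : ∀ e ∈ (SimpleGraph.cycleGraph (2 * d + 1)).edgeSet, ∀ t : ℕ,
          1 ≤ t → t ≤ d → t ∈ (if e ∈ (SimpleGraph.cycleGraph (2 * d + 1)).edgeFinset
            then Finset.Icc 1 d else ∅) := by
        intro e he t h1 h2
        rw [if_pos (by rwa [SimpleGraph.mem_edgeFinset]), Finset.mem_Icc]
        exact ⟨h1, h2⟩
      set m : ℕ := (v - u).val with hmdef
      have hmcast : ((m : ℕ) : Fin (2 * d + 1)) = v - u := Fin.cast_val_eq_self _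
      have hmlt : m < 2 * d + 1 := (v - u).isLt
      have hm0 : m ≠ 0 := by
        intro h
        apply huv
        have : v - u = 0 := by rw [← hmcast, h]; push_cast; ring
        exact (sub_eq_zero.mp this).symm
      by_cases hmd : m ≤ d
      · -- forward walk
        refine temporalReach_of_path _ hlab
          ((cycWalk hn2 m u).copy rfl (by rw [hmcast]; ring)) ?_ ?_
        · rw [SimpleGraph.Walk.isPath_copy]
          exact cycWalk_isPath hn2 m (by omega) u
        · rw [SimpleGraph.Walk.length_copy, cycWalk_length]
          exact hmd
      · -- backward walk: reverse of the forward walk from v to u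
        have hl : 2 * d + 1 - m ≤ d := by omega
        have hlu : v + ((2 * d + 1 - m : ℕ) : Fin (2 * d + 1)) = u := by
          have hzero : ((2 * d + 1 : ℕ) : Fin (2 * d + 1)) = 0 := by
            exact_mod_cast Fin.natCast_self (2 * d + 1)
          rw [Nat.cast_sub hmlt.le, hzero, hmcast]
          ring
        refine temporalReach_of_path _ hlab
          (((cycWalk hn2 (2 * d + 1 - m) v).copy rfl hlu).reverse) ?_ ?_
        · rw [SimpleGraph.Walk.isPath_reverse_iff, SimpleGraph.Walk.isPath_copy]
          exact cycWalk_isPath hn2 _ (by omega) v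
        · rw [SimpleGraph.Walk.length_reverse, SimpleGraph.Walk.length_copy, cycWalk_length]
          exact hl
    · -- the sum equals 2d² + d
      have hcard : (SimpleGraph.cycleGraph (2 * d + 1)).edgeFinset.card = 2 * d + 1 := by
        rw [cyc_edgeFinset hn3, Finset.card_image_of_injective _ (cyc_edge_inj hn3),
          Finset.card_univ, Fintype.card_fin]
      calc ∑ e : Sym2 (Fin (2 * d + 1)),
            (if e ∈ (SimpleGraph.cycleGraph (2 * d + 1)).edgeFinset
              then Finset.Icc 1 d else ∅).card
          = ∑ e : Sym2 (Fin (2 * d + 1)),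
            (if e ∈ (SimpleGraph.cycleGraph (2 * d + 1)).edgeFinset then d else 0) := by
            refine Finset.sum_congr rfl fun e _ => ?_
            split_ifs
            · rw [Nat.card_Icc]; omega
            · simp
        _ = ∑ e ∈ (SimpleGraph.cycleGraph (2 * d + 1)).edgeFinset, d := by
            rw [Finset.sum_ite_mem, Finset.univ_inter]
        _ = 2 * d ^ 2 + d := by
            rw [Finset.sum_const, hcard, smul_eq_mul]; ring
  · -- lower bound
    rintro k ⟨lab, ⟨hval0, hval1⟩, hage, hTC, rfl⟩
    have key : ∀ j : Fin (2 * d + 1), Finset.Icc 1 d ⊆ lab s(j, j + 1) := by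
      intro j i hi
      rw [Finset.mem_Icc] at hi
      set u : Fin (2 * d + 1) := j - ((i - 1 : ℕ) : Fin (2 * d + 1)) with hu
      have hne : u ≠ u + ((d : ℕ) : Fin (2 * d + 1)) := by
        intro h
        have h0 : ((d : ℕ) : Fin (2 * d + 1)) = ((0 : ℕ) : Fin (2 * d + 1)) := by
          have := (add_eq_left (a := u)).mp h.symm
          rw [this]; push_cast; ring
        have := fin_cast_inj' (n := 2 * d + 1) (by omega) (by omega) h0
        omega
      obtain ⟨p, hp, ts, hchain, hfa⟩ := hTC u (u + ((d : ℕ) : Fin (2 * d + 1))) hne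
      obtain ⟨hlen2, hget⟩ := List.forall₂_iff_get.mp hfa
      rw [SimpleGraph.Walk.length_edges] at hlen2
      -- every label is between 1 and d
      have hts1 : ∀ (x : ℕ) (hx : x < ts.length), 1 ≤ ts.get ⟨x, hx⟩ := by
        intro x hx
        exact hval1 _ _ (hget x hx (by rw [SimpleGraph.Walk.length_edges]; omega))
      have htsd : ∀ (x : ℕ) (hx : x < ts.length), ts.get ⟨x, hx⟩ ≤ d := by
        intro x hx
        exact hage _ _ (hget x hx (by rw [SimpleGraph.Walk.length_edges]; omega))
      -- the walk has length at most d
      have hplen : p.length ≤ d := by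
        by_contra hgt
        push_neg at hgt
        have h1 := chain_get_le' hchain (i := 0) (j := d) (by omega) (by omega)
        have h2 := hts1 0 (by omega)
        have h3 := htsd d (by omega)
        omega
      have he := cyc_walk_edges_forced hd p d le_rfl rfl hplen
      have hlen3 : ts.length = d := by
        rw [hlen2, ← SimpleGraph.Walk.length_edges, he]
        rw [List.length_map, List.length_range]
      set c : ℕ := i - 1 with hc
      have hcd : c < d := by omega
      -- the c-th label is exactly c + 1 = i
      have hlow := chain_get_le' hchain (i := 0) (j := c) (by omega) (by omega)
      have hhigh := chain_get_le' hchain (i := c) (j := d - 1) (by omega) (by omega)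
      have h1 := hts1 0 (by omega)
      have h2 := htsd (d - 1) (by omega)
      have hval : ts.get ⟨c, by omega⟩ = i := by omega
      -- the c-th edge is s(j, j+1)
      have hedge : p.edges.get ⟨c, by rw [SimpleGraph.Walk.length_edges]; omega⟩
          = s(j, j + 1) := by
        have hje : u + ((c : ℕ) : Fin (2 * d + 1)) = j := by
          rw [hu, hc]
          exact sub_add_cancel j _
        rw [List.get_eq_getElem, List.getElem_of_eq he,
          List.getElem_map, List.getElem_range, hje]
      have hmem := hget c (by omega) (by rw [SimpleGraph.Walk.length_edges]; omega)
      simp only [hval, hedge] at hmem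
      exact hmem
    have hinj := cyc_edge_inj (n := 2 * d + 1) hn3
    calc 2 * d ^ 2 + d = ∑ _j : Fin (2 * d + 1), d := by
          rw [Finset.sum_const, Finset.card_univ, Fintype.card_fin, smul_eq_mul]; ring
      _ ≤ ∑ j : Fin (2 * d + 1), (lab s(j, j + 1)).card := by
          refine Finset.sum_le_sum fun j _ => ?_
          have := Finset.card_le_card (key j)
          rwa [Nat.card_Icc, Nat.add_sub_cancel] at this
      _ = ∑ e ∈ Finset.univ.image (fun j : Fin (2 * d + 1) => s(j, j + 1)),
            (lab e).card := by
          rw [Finset.sum_image (fun a _ b _ hab => hinj hab)]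
      _ ≤ ∑ e : Sym2 (Fin (2 * d + 1)), (lab e).card :=
          Finset.sum_le_sum_of_subset (Finset.subset_univ _)
end

section
/- Let (G,λ) be an arbitrary temporally connected temporal graph with |λ| = m total time-labels. Then there exists a sequence c(1), c(2), …, c(m) of m phone calls on the vertex set of G, each call being the pair of endpoints of an edge of G, that completes gossip (i.e., results in every agent knowing every agent's secret). -/
open scoped Classical

variable {V : Type*} {A : Type*}

/-- One phone call along the unordered pair `e`: both participants learn
every secret either of them knew; everyone else is unchanged. -/
def gossipStep (K : A → Set A) (e : Sym2 A) : A → Set A :=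
  fun a => {s | (a ∈ e ∧ ∃ b ∈ e, s ∈ K b) ∨ (a ∉ e ∧ s ∈ K a)}

/-- The knowledge of each agent after performing the calls in order, starting
from the state where each agent knows only its own secret. -/
def gossipRun (calls : List (Sym2 A)) : A → Set A :=
  calls.foldl gossipStep (fun a => {a})

/-- The sequence of calls completes gossip: afterwards every agent knows every secret. -/
def CompletesGossip (calls : List (Sym2 A)) : Prop :=
  ∀ a b : A, b ∈ gossipRun calls a

/-! ### Auxiliary lemmas -/

lemma gossipStep_mono (K : A → Set A) (e : Sym2 A) {a s : A} (h : s ∈ K a) :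
    s ∈ gossipStep K e a := by
  by_cases ha : a ∈ e
  · exact Or.inl ⟨ha, a, ha, h⟩
  · exact Or.inr ⟨ha, h⟩

lemma gossipStep_call (K : A → Set A) (e : Sym2 A) {a b s : A}
    (ha : a ∈ e) (hb : b ∈ e) (h : s ∈ K b) : s ∈ gossipStep K e a :=
  Or.inl ⟨ha, b, hb, h⟩

lemma gossipFold_mono : ∀ (L : List (Sym2 A)) (K : A → Set A) (a s : A),
    s ∈ K a → s ∈ L.foldl gossipStep K a := by
  intro L
  induction L with
  | nil => intro K a s h; exact h
  | cons e L ih => intro K a s h; exact ih _ a s (gossipStep_mono K e h)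

/-- Propagation of a secret along a walk whose edge list is a sublist of the calls. -/
lemma walk_propagate (G : SimpleGraph V) :
    ∀ {u v : V} (p : G.Walk u v) (L : List (Sym2 V)) (K : V → Set V) (s : V),
      s ∈ K u → p.edges.Sublist L → s ∈ L.foldl gossipStep K v := by
  intro u v p
  induction p with
  | nil => intro L K s hs _; exact gossipFold_mono L K _ s hs
  | @cons u w v h q ih =>
    intro L K s hs hsub
    rw [SimpleGraph.Walk.edges_cons, List.cons_sublist_iff] at hsub
    obtain ⟨r₁, r₂, rfl, hmem, hsub⟩ := hsub
    rw [List.foldl_append]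
    refine ih r₂ _ s ?_ hsub
    obtain ⟨p₁, p₂, rfl⟩ := List.append_of_mem hmem
    rw [List.foldl_append, List.foldl_cons]
    refine gossipFold_mono p₂ _ w s ?_
    exact gossipStep_call _ _ (Sym2.mem_mk_right u w) (Sym2.mem_mk_left u w)
      (gossipFold_mono p₁ K u s hs)

/-- A strictly `f`-increasing list whose elements all occur in an `f`-sorted list
is a sublist of it. -/
lemma sublist_of_sorted {α : Type*} (f : α → ℕ) :
    ∀ (L : List α), L.Pairwise (fun x y => f x ≤ f y) →
      ∀ (zs : List α), zs.Pairwise (fun x y => f x < f y) →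
      (∀ z ∈ zs, z ∈ L) → zs.Sublist L := by
  intro L
  induction L with
  | nil =>
    intro _ zs _ hmem
    cases zs with
    | nil => exact List.Sublist.refl _
    | cons z zs => exact absurd (hmem z List.mem_cons_self) List.not_mem_nil
  | cons x L ih =>
    intro hL zs hzs hmem
    rw [List.pairwise_cons] at hL
    cases zs with
    | nil => exact List.nil_sublist _
    | cons z zs =>
      rw [List.pairwise_cons] at hzs
      by_cases hzx : z = x
      · subst hzx
        refine List.Sublist.cons₂ z (ih hL.2 zs hzs.2 ?_)
        intro w hw
        have hwL : w ∈ z :: L := hmem w (List.mem_cons_of_mem _ hw)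
        rcases List.mem_cons.mp hwL with h | h
        · exact absurd (h ▸ hzs.1 w hw) (lt_irrefl _)
        · exact h
      · refine List.Sublist.cons x (ih hL.2 (z :: zs) (List.pairwise_cons.mpr hzs) ?_)
        intro w hw
        rcases List.mem_cons.mp hw with rfl | hw'
        · rcases List.mem_cons.mp (hmem w List.mem_cons_self) with h | h
          · exact absurd h hzx
          · exact h
        · have hzL : z ∈ L := by
            rcases List.mem_cons.mp (hmem z List.mem_cons_self) with h | h
            · exact absurd h hzx
            · exact h
          have hxz : f x ≤ f z := hL.1 z hzL
          have hzw : f z < f w := hzs.1 w hw'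
          rcases List.mem_cons.mp (hmem w (List.mem_cons_of_mem _ hw')) with h | h
          · exact absurd (h ▸ (lt_of_le_of_lt hxz hzw)) (lt_irrefl _)
          · exact h

/-- From any temporally connected temporal graph with `m` labels in total one obtains a
sequence of `m` phone calls, each along an edge of `G`, that completes gossip. -/
theorem stmt4 [Fintype V] [DecidableEq V] (G : SimpleGraph V)
    (lab : Sym2 V → Finset ℕ) (hsupp : ∀ e, e ∉ G.edgeSet → lab e = ∅)
    (hconn : TemporallyConnected G lab) (m : ℕ)
    (hm : ∑ e : Sym2 V, (lab e).card = m) :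
    ∃ c : Fin m → Sym2 V, (∀ i, c i ∈ G.edgeSet) ∧ CompletesGossip (List.ofFn c) := by
  classical
  -- the list of all (time, edge) pairs
  set pairs : List (ℕ × Sym2 V) :=
    (Finset.univ : Finset (Sym2 V)).toList.flatMap
      (fun e => (lab e).toList.map (fun t => (t, e))) with hpairs
  have hmem_pairs : ∀ z : ℕ × Sym2 V, z ∈ pairs ↔ z.1 ∈ lab z.2 := by
    intro z
    simp only [hpairs, List.mem_flatMap, Finset.mem_toList, List.mem_map, Finset.mem_univ,
      true_and]
    constructor
    · rintro ⟨e, t, ht, rfl⟩; exact ht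
    · intro h; exact ⟨z.2, z.1, h, rfl⟩
  -- sort by time
  set L : List (ℕ × Sym2 V) := pairs.mergeSort (fun x y => x.1 ≤ y.1) with hL
  have hperm : L.Perm pairs := List.mergeSort_perm pairs _
  have hsorted : L.Pairwise (fun x y : ℕ × Sym2 V => x.1 ≤ y.1) := by
    have := List.pairwise_mergeSort (le := fun x y : ℕ × Sym2 V => decide (x.1 ≤ y.1))
      (fun a b c hab hbc => by
        simp only [decide_eq_true_eq] at *; omega)
      (fun a b => by
        simp only [Bool.or_eq_true, decide_eq_true_eq]; omega) pairs
    refine this.imp ?_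
    intro a b h
    simpa using h
  set calls : List (Sym2 V) := L.map Prod.snd with hcalls
  have hlenpairs : pairs.length = m := by
    rw [hpairs, List.length_flatMap, ← hm]
    rw [Finset.sum, ← Multiset.sum_coe, ← Multiset.map_coe, Finset.coe_toList]
    congr 1
    ext e
    simp
  have hlen : calls.length = m := by
    rw [hcalls, List.length_map, hperm.length_eq, hlenpairs]
  refine ⟨fun i => calls.get (Fin.cast hlen.symm i), ?_, ?_⟩
  · intro i
    show calls.get (Fin.cast hlen.symm i) ∈ G.edgeSet
    have hmem : calls.get (Fin.cast hlen.symm i) ∈ calls := by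
      apply List.get_mem
    obtain ⟨z, hz, hz2⟩ := List.mem_map.mp (show _ ∈ L.map Prod.snd from hmem)
    have : z ∈ pairs := hperm.mem_iff.mp hz
    have ht : z.1 ∈ lab z.2 := (hmem_pairs z).mp this
    by_contra hne
    rw [← hz2] at hne
    rw [hsupp _ hne] at ht
    exact absurd ht (Finset.notMem_empty _)
  · have hofn : List.ofFn (fun i => calls.get (Fin.cast hlen.symm i)) = calls := by
      apply List.ext_get
      · simp [hlen]
      · intro n h1 h2
        simp [List.get_ofFn]
    rw [hofn]
    intro a b
    unfold gossipRun
    by_cases hab : a = b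
    · subst hab
      exact gossipFold_mono calls _ a a rfl
    · obtain ⟨p, _, ts, hchain, hfa⟩ := hconn b a (fun h => hab h.symm)
      -- the list of (time, edge) pairs along the path
      set zs : List (ℕ × Sym2 V) := ts.zip p.edges with hzs
      have hlents : ts.length = p.edges.length := hfa.length_eq
      have hmapfst : zs.map Prod.fst = ts := List.map_fst_zip (le_of_eq hlents)
      have hmapsnd : zs.map Prod.snd = p.edges := List.map_snd_zip (le_of_eq hlents.symm)
      have hzpair : zs.Pairwise (fun x y : ℕ × Sym2 V => x.1 < y.1) := by
        have : (zs.map Prod.fst).Pairwise (· < ·) := by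
          rw [hmapfst]; exact List.isChain_iff_pairwise.mp hchain
        exact (List.pairwise_map.mp this)
      have hzmem : ∀ z ∈ zs, z ∈ L := by
        intro z hz
        refine hperm.mem_iff.mpr ((hmem_pairs z).mpr ?_)
        exact (List.forall₂_iff_zip.mp hfa).2 (by exact hz)
      have hsub : zs.Sublist L := sublist_of_sorted Prod.fst L hsorted zs hzpair hzmem
      have hsub2 : p.edges.Sublist calls := by
        rw [← hmapsnd, hcalls]
        exact hsub.map Prod.snd
      exact walk_propagate G p calls _ b rfl hsub2
end
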